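/- Let H be a non-symmetric 4×4 complex Hadamard matrix in dephased form, and let ρ ∈ ℂ be non-real with |ρ| = 1 such that ρ/2 is an entry of H. Then either tr(H) = (−1 + ρ)/2 and the characteristic polynomial of H equals (X − 1)·(X + 1)·(X² + ((1 − ρ)/2)·X − ρ), or tr(H) = (−1 − ρ)/2 and the characteristic polynomial of H equals (X − 1)·(X + 1)·(X² + ((1 + ρ)/2)·X + ρ). -/

import Mathlib

open Matrix Polynomial Complex

/-- A 4×4 complex Hadamard matrix: unitary with all entries of absolute value `1/√4`. -/
def IsHadamard (H : Matrix (Fin 4) (Fin 4) ℂ) : Prop :=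
  H * Hᴴ = 1 ∧ Hᴴ * H = 1 ∧ ∀ i j, ‖H i j‖ = 1 / Real.sqrt 4

/-- Dephased form: all entries of the 0th row and 0th column equal `1/√4`. -/
def IsDephased (H : Matrix (Fin 4) (Fin 4) ℂ) : Prop :=
  (∀ j, H 0 j = ((1 / Real.sqrt 4 : ℝ) : ℂ)) ∧ (∀ i, H i 0 = ((1 / Real.sqrt 4 : ℝ) : ℂ))

open scoped ComplexConjugate

/-!
Write `K = 2H`: a unimodular matrix whose row 0 and column 0 consist of ones, so that every other
row and column of `K` sums to zero. Four unit complex numbers summing to zero form two antipodal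
pairs, so rows 1 and 2 of `K` each contain an entry `-1`. If both lie in the same column, the sum
of that column gives an entry `1` in row 3; otherwise the orthogonality of rows 1 and 2 factors
and gives an entry `1` in one of them. Row and column sums then determine `K` from the position
`(i, j)` of this entry `1`: for `i = j` the matrix is symmetric, and for `i ≠ j` a simultaneous
permutation of the indices `1, 2, 3` carries `H` to `hadamardFamily y`. Its entries are `±1/2`
and `±y/2`, and its characteristic polynomial is `(X - 1)(X + 1)(X² + (1 - y)/2 X - y)`, so the
non-real entry `ρ/2` forces `y = ±ρ`.
-/

section UnitComplex

variable {a b c : ℂ}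

lemma mul_conj_eq_one_of_norm_eq_one (ha : ‖a‖ = 1) : a * conj a = 1 := by
  rw [mul_conj', ha]; norm_num

lemma eq_neg_one_or_of_one_add_add_add_eq_zero (ha : ‖a‖ = 1) (hb : ‖b‖ = 1) (hc : ‖c‖ = 1)
    (h : 1 + a + b + c = 0) : a = -1 ∨ b = -1 ∨ c = -1 := by
  have h' : 1 + conj a + conj b + conj c = 0 := by simpa using congrArg conj h
  -- `conj x = x⁻¹` turns `h'` into `ab + bc + ca + abc = 0`
  have key : (a + 1) * (b + 1) * (c + 1) = 0 := by
    linear_combination a * b * c * h' + h - b * c * mul_conj_eq_one_of_norm_eq_one ha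
      - a * c * mul_conj_eq_one_of_norm_eq_one hb - a * b * mul_conj_eq_one_of_norm_eq_one hc
  simp only [mul_eq_zero, add_eq_zero_iff_eq_neg] at key
  tauto

lemma eq_neg_one_and_eq_neg_one_of_add_eq_neg_two (ha : ‖a‖ = 1) (hb : ‖b‖ = 1)
    (h : a + b = -2) : a = -1 ∧ b = -1 := by
  have h' : conj a + conj b = -2 := by simpa [map_ofNat] using congrArg conj h
  have hsum : normSq (a + 1) + normSq (b + 1) = 0 := by
    have : (normSq (a + 1) : ℂ) + normSq (b + 1) = 0 := by
      rw [← mul_conj, ← mul_conj, map_add, map_add, map_one]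
      linear_combination mul_conj_eq_one_of_norm_eq_one ha + mul_conj_eq_one_of_norm_eq_one hb
        + h + h'
    exact_mod_cast this
  have ha1 : a + 1 = 0 :=
    normSq_eq_zero.mp (by linarith [normSq_nonneg (a + 1), normSq_nonneg (b + 1)])
  exact ⟨by linear_combination ha1, by linear_combination h - ha1⟩

end UnitComplex

lemma exists_perm_fixing_zero {i j : Fin 4} (hi : i ≠ 0) (hj : j ≠ 0) (hij : i ≠ j) :
    ∃ σ : Equiv.Perm (Fin 4), σ 0 = 0 ∧ σ 1 = i ∧ σ 2 = j := by
  revert i j; decide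

lemma apply_eq_half_or_apply_eq_half_of_orthogonal {u v : Fin 4 → ℂ} (hu0 : u 0 = 1 / 2)
    (hv0 : v 0 = 1 / 2) (hu : ∑ j, u j = 0) (hv : ∑ j, v j = 0)
    (huv : ∑ j, u j * conj (v j) = 0) {j k : Fin 4} (hj : j ≠ 0) (hk : k ≠ 0) (hjk : j ≠ k)
    (huj : u j = -1 / 2) (hvk : v k = -1 / 2) : u k = 1 / 2 ∨ v j = 1 / 2 := by
  obtain ⟨σ, hσ0, hσj, hσk⟩ := exists_perm_fixing_zero hj hk hjk
  rw [← Equiv.sum_comp σ] at hu hv huv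
  simp only [Fin.sum_univ_four, hσ0, hσj, hσk, hu0, hv0, huj, hvk] at hu hv huv
  have hu3 : u (σ 3) = -u k := by linear_combination hu
  have hv3 : conj (v (σ 3)) = -conj (v j) := by
    simpa using congrArg conj (by linear_combination hv : v (σ 3) = -v j)
  rw [hu3, hv3] at huv
  simp only [map_div₀, map_one, map_ofNat, map_neg] at huv
  have key : (1 / 2 - u k) * (1 / 2 - conj (v j)) = 0 := by linear_combination huv
  rcases mul_eq_zero.mp key with h | h
  · exact Or.inl (by linear_combination -h)
  · have hvj : conj (v j) = 1 / 2 := by linear_combination -h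
    exact Or.inr (by simpa [map_ofNat] using congrArg conj hvj)

/-- The Fourier family `F₄⁽¹⁾(a)` with rows 1 and 2 exchanged, where `y = i e^{ia}`. -/
noncomputable def hadamardFamily (y : ℂ) : Matrix (Fin 4) (Fin 4) ℂ :=
  (1 / 2 : ℂ) • !![1, 1, 1, 1; 1, -1, 1, -1; 1, y, -1, -y; 1, -y, -1, y]

lemma trace_hadamardFamily (y : ℂ) : (hadamardFamily y).trace = (-1 + y) / 2 := by
  rw [trace, Fin.sum_univ_four]
  simp only [hadamardFamily, diag_apply, of_apply, cons_val, Matrix.smul_apply]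
  ring

lemma charpoly_hadamardFamily (y : ℂ) :
    (hadamardFamily y).charpoly = (X - 1) * (X + 1) * (X ^ 2 + C ((1 - y) / 2) * X - C y) := by
  refine Polynomial.funext fun r => ?_
  rw [eval_charpoly, det_succ_row_zero]
  simp only [scalar_apply, hadamardFamily, smul_of, smul_cons, Matrix.sub_apply, of_apply,
    det_fin_three, submatrix_apply, Fin.succAbove, cons_val, Fin.reduceSucc, Fin.reduceCastSucc,
    Fin.sum_univ_succ, Fin.coe_ofNat_eq_mod, diagonal_apply_eq, ↓reduceIte, ne_eq, Fin.reduceEq,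
    not_false_eq_true, diagonal_apply_ne, Fin.reduceLT, eval_mul, eval_sub, eval_X, eval_one,
    eval_add, eval_pow, eval_C]
  ring

lemma eq_or_eq_neg_of_hadamardFamily_apply {y ρ : ℂ} (hρ : ρ.im ≠ 0) {i j : Fin 4}
    (h : hadamardFamily y i j = ρ / 2) : y = ρ ∨ y = -ρ := by
  have hρ₁ : ρ ≠ 1 := by rintro rfl; simp at hρ
  have hρ₂ : ρ ≠ -1 := by rintro rfl; simp at hρ
  fin_cases i <;> fin_cases j <;>
    simp only [hadamardFamily, Fin.reduceFinMk, Matrix.smul_apply, of_apply, cons_val] at h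
  all_goals first
    | exact (hρ₁ (by linear_combination -2 * h)).elim
    | exact (hρ₂ (by linear_combination -2 * h)).elim
    | exact Or.inl (by linear_combination 2 * h)
    | exact Or.inr (by linear_combination -2 * h)

lemma one_div_sqrt_four : 1 / Real.sqrt 4 = 1 / 2 := by
  rw [show (4 : ℝ) = 2 ^ 2 by norm_num, Real.sqrt_sq zero_le_two]

section Hadamard

variable {H : Matrix (Fin 4) (Fin 4) ℂ}

lemma IsDephased.apply_zero_left (hd : IsDephased H) (j : Fin 4) : H 0 j = 1 / 2 := by
  rw [hd.1 j, one_div_sqrt_four]; norm_num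

lemma IsDephased.apply_zero_right (hd : IsDephased H) (i : Fin 4) : H i 0 = 1 / 2 := by
  rw [hd.2 i, one_div_sqrt_four]; norm_num

lemma IsDephased.submatrix (hd : IsDephased H) {σ : Equiv.Perm (Fin 4)} (hσ : σ 0 = 0) :
    IsDephased (H.submatrix σ σ) :=
  ⟨fun j => by simpa [hσ] using hd.1 (σ j), fun i => by simpa [hσ] using hd.2 (σ i)⟩

lemma IsHadamard.submatrix (hH : _root_.IsHadamard H) (σ : Equiv.Perm (Fin 4)) :
    _root_.IsHadamard (H.submatrix σ σ) := by
  refine ⟨?_, ?_, fun i j => hH.2.2 (σ i) (σ j)⟩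
  · rw [conjTranspose_submatrix, submatrix_mul_equiv, hH.1, submatrix_one_equiv]
  · rw [conjTranspose_submatrix, submatrix_mul_equiv, hH.2.1, submatrix_one_equiv]

lemma IsHadamard.norm_two_mul_apply (hH : _root_.IsHadamard H) (i j : Fin 4) : ‖2 * H i j‖ = 1 := by
  rw [norm_mul, hH.2.2, one_div_sqrt_four]; norm_num

lemma IsHadamard.sum_mul_conj (hH : _root_.IsHadamard H) {i k : Fin 4} (hik : i ≠ k) :
    ∑ j, H i j * conj (H k j) = 0 := by
  simpa [mul_apply, one_apply_ne hik] using congrFun (congrFun hH.1 i) k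

lemma IsHadamard.sum_row (hH : _root_.IsHadamard H) (hd : IsDephased H) {i : Fin 4} (hi : i ≠ 0) :
    ∑ j, H i j = 0 := by
  simpa [hd.apply_zero_left, ← Finset.sum_mul, map_ofNat] using hH.sum_mul_conj hi

lemma IsHadamard.sum_col (hH : _root_.IsHadamard H) (hd : IsDephased H) {j : Fin 4} (hj : j ≠ 0) :
    ∑ i, H i j = 0 := by
  simpa [mul_apply, one_apply_ne hj.symm, hd.apply_zero_right, ← Finset.mul_sum, map_ofNat]
    using congrFun (congrFun hH.2.1 0) j

lemma IsHadamard.apply_eq_neg_half_of_add_eq_neg_one (hH : _root_.IsHadamard H) {i j k l : Fin 4}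
    (h : H i j + H k l = -1) : H i j = -1 / 2 ∧ H k l = -1 / 2 := by
  obtain ⟨h₁, h₂⟩ := eq_neg_one_and_eq_neg_one_of_add_eq_neg_two (hH.norm_two_mul_apply i j)
    (hH.norm_two_mul_apply k l) (by linear_combination 2 * h)
  exact ⟨by linear_combination h₁ / 2, by linear_combination h₂ / 2⟩

lemma IsHadamard.exists_apply_eq_neg_half (hH : _root_.IsHadamard H) (hd : IsDephased H)
    {i : Fin 4} (hi : i ≠ 0) : ∃ j ≠ 0, H i j = -1 / 2 := by
  have h := hH.sum_row hd hi
  rw [Fin.sum_univ_four, hd.apply_zero_right] at h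
  rcases eq_neg_one_or_of_one_add_add_add_eq_zero (hH.norm_two_mul_apply i 1)
      (hH.norm_two_mul_apply i 2) (hH.norm_two_mul_apply i 3) (by linear_combination 2 * h)
    with h' | h' | h'
  exacts [⟨1, by decide, by linear_combination h' / 2⟩, ⟨2, by decide, by linear_combination h' / 2⟩,
    ⟨3, by decide, by linear_combination h' / 2⟩]

lemma IsHadamard.exists_apply_eq_half (hH : _root_.IsHadamard H) (hd : IsDephased H) :
    ∃ i j, i ≠ 0 ∧ j ≠ 0 ∧ H i j = 1 / 2 := by
  obtain ⟨j, hj, h1j⟩ := hH.exists_apply_eq_neg_half hd (i := 1) (by decide)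
  obtain ⟨k, hk, h2k⟩ := hH.exists_apply_eq_neg_half hd (i := 2) (by decide)
  rcases eq_or_ne j k with rfl | hjk
  · have h := hH.sum_col hd hj
    rw [Fin.sum_univ_four, hd.apply_zero_left, h1j, h2k] at h
    exact ⟨3, j, by decide, hj, by linear_combination h⟩
  · rcases apply_eq_half_or_apply_eq_half_of_orthogonal (hd.apply_zero_right 1)
      (hd.apply_zero_right 2) (hH.sum_row hd (by decide)) (hH.sum_row hd (by decide))
      (hH.sum_mul_conj (by decide)) hj hk hjk h1j h2k with h | h
    exacts [⟨1, k, by decide, hk, h⟩, ⟨2, j, by decide, hj, h⟩]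

lemma IsHadamard.transpose_eq_of_apply_one_one (hH : _root_.IsHadamard H) (hd : IsDephased H)
    (h : H 1 1 = 1 / 2) : Hᵀ = H := by
  have r1 := hH.sum_row hd (i := 1) (by decide)
  have r2 := hH.sum_row hd (i := 2) (by decide)
  have c1 := hH.sum_col hd (j := 1) (by decide)
  have c2 := hH.sum_col hd (j := 2) (by decide)
  simp only [Fin.sum_univ_four, hd.apply_zero_left, hd.apply_zero_right] at r1 r2 c1 c2
  obtain ⟨h12, h13⟩ := hH.apply_eq_neg_half_of_add_eq_neg_one
    (by linear_combination r1 - h : H 1 2 + H 1 3 = -1)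
  obtain ⟨h21, h31⟩ := hH.apply_eq_neg_half_of_add_eq_neg_one
    (by linear_combination c1 - h : H 2 1 + H 3 1 = -1)
  have h23 : H 2 3 = -H 2 2 := by linear_combination r2 - h21
  have h32 : H 3 2 = -H 2 2 := by linear_combination c2 - h12
  ext i j
  fin_cases i <;> fin_cases j <;>
    simp [h12, h13, h21, h31, h23, h32, hd.apply_zero_left, hd.apply_zero_right]

lemma IsHadamard.transpose_eq_of_apply_self (hH : _root_.IsHadamard H) (hd : IsDephased H)
    {i : Fin 4} (hi : i ≠ 0) (h : H i i = 1 / 2) : Hᵀ = H := by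
  set σ := Equiv.swap 1 i
  have hσ : σ 0 = 0 := Equiv.swap_apply_of_ne_of_ne (by decide) hi.symm
  have hT := (hH.submatrix σ).transpose_eq_of_apply_one_one (hd.submatrix hσ)
    (by simpa [σ] using h)
  rw [transpose_submatrix] at hT
  simpa using congrArg (·.submatrix σ.symm σ.symm) hT

lemma IsHadamard.eq_hadamardFamily_of_apply_one_two (hH : _root_.IsHadamard H)
    (hd : IsDephased H) (h : H 1 2 = 1 / 2) : H = hadamardFamily (2 * H 3 3) := by
  have r1 := hH.sum_row hd (i := 1) (by decide)
  have r2 := hH.sum_row hd (i := 2) (by decide)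
  have r3 := hH.sum_row hd (i := 3) (by decide)
  have c1 := hH.sum_col hd (j := 1) (by decide)
  have c2 := hH.sum_col hd (j := 2) (by decide)
  simp only [Fin.sum_univ_four, hd.apply_zero_left, hd.apply_zero_right] at r1 r2 r3 c1 c2
  obtain ⟨h11, h13⟩ := hH.apply_eq_neg_half_of_add_eq_neg_one
    (by linear_combination r1 - h : H 1 1 + H 1 3 = -1)
  obtain ⟨h22, h32⟩ := hH.apply_eq_neg_half_of_add_eq_neg_one
    (by linear_combination c2 - h : H 2 2 + H 3 2 = -1)
  have h31 : H 3 1 = -H 3 3 := by linear_combination r3 - h32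
  have h21 : H 2 1 = H 3 3 := by linear_combination c1 - h11 - h31
  have h23 : H 2 3 = -H 3 3 := by linear_combination r2 - h22 - h21
  ext i j
  fin_cases i <;> fin_cases j <;>
    simp [hadamardFamily, h, h11, h13, h22, h32, h31, h21, h23, hd.apply_zero_left,
      hd.apply_zero_right, neg_div]

end Hadamard

theorem nonsymmetric_hadamard_charpoly_general
    (H : Matrix (Fin 4) (Fin 4) ℂ)
    (hH : _root_.IsHadamard H) (hd : IsDephased H) (hnonsym : H ≠ Hᵀ)
    (ρ : ℂ) (hρ : ρ.im ≠ 0)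
    (hentry : ∃ i j, H i j = ρ / 2) :
    (H.trace = (-1 + ρ) / 2 ∧
      H.charpoly = (X - 1) * (X + 1) * (X ^ 2 + C ((1 - ρ) / 2) * X - C ρ)) ∨
    (H.trace = (-1 - ρ) / 2 ∧
      H.charpoly = (X - 1) * (X + 1) * (X ^ 2 + C ((1 + ρ) / 2) * X + C ρ)) := by
  obtain ⟨i, j, hi, hj, hij⟩ := hH.exists_apply_eq_half hd
  have hne : i ≠ j := by
    rintro rfl
    exact hnonsym (hH.transpose_eq_of_apply_self hd hi hij).symm
  obtain ⟨σ, hσ0, hσ1, hσ2⟩ := exists_perm_fixing_zero hi hj hne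
  have hF := (hH.submatrix σ).eq_hadamardFamily_of_apply_one_two (hd.submatrix hσ0)
    (by simpa [hσ1, hσ2] using hij)
  generalize 2 * H.submatrix σ σ 3 3 = y at hF
  have hy : y = ρ ∨ y = -ρ := by
    obtain ⟨k, l, hkl⟩ := hentry
    exact eq_or_eq_neg_of_hadamardFamily_apply hρ (i := σ.symm k) (j := σ.symm l)
      (by simpa [← hF] using hkl)
  have htrace : H.trace = (hadamardFamily y).trace := by
    rw [← hF]; exact (Equiv.sum_comp σ fun k => H k k).symm
  have hcharpoly : H.charpoly = (hadamardFamily y).charpoly := by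
    rw [← hF]; exact (charpoly_reindex σ.symm H).symm
  rw [htrace, hcharpoly, trace_hadamardFamily, charpoly_hadamardFamily]
  rcases hy with rfl | rfl
  · exact Or.inl ⟨rfl, rfl⟩
  · refine Or.inr ⟨by ring, ?_⟩
    simp only [sub_neg_eq_add, map_neg]

theorem nonsymmetric_hadamard_charpoly
    (H : Matrix (Fin 4) (Fin 4) ℂ)
    (hH : _root_.IsHadamard H) (hd : IsDephased H) (hnonsym : H ≠ Hᵀ)
    (ρ : ℂ) (hρ : ρ.im ≠ 0) (habs : ‖ρ‖ = 1)
    (hentry : ∃ i j, H i j = ρ / 2) :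
    (H.trace = (-1 + ρ) / 2 ∧
      H.charpoly = (X - 1) * (X + 1) * (X ^ 2 + C ((1 - ρ) / 2) * X - C ρ)) ∨
    (H.trace = (-1 - ρ) / 2 ∧
      H.charpoly = (X - 1) * (X + 1) * (X ^ 2 + C ((1 + ρ) / 2) * X + C ρ)) :=
  nonsymmetric_hadamard_charpoly_general H hH hd hnonsym ρ hρ hentry
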